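/- N-step safe excursion of the explicit system level backup controller (key step of Theorem 2): let A ∈ ℝ^{n×n}, B ∈ ℝ^{n×m}, B_w ∈ ℝ^{n×n} invertible, α > 0, constraint sets X = {x : ⟨A_{x,j}, x⟩ ≤ b_{x,j}, j = 1,…,n_x} and U = {u : ⟨A_{u,j}, u⟩ ≤ b_{u,j}, j = 1,…,n_u}. Suppose block lower triangular Φ_x ∈ L^{N,n×n}, Φ_u ∈ L^{N,m×n} and vectors z₀,…,z_N, v₀,…,v_{N−1} satisfy: (I − Z𝒜)Φ_x − ZℬΦ_u = ℰ̃(α) where ℰ̃(α) := diag(αI_n, B_w,…,B_w); z_{k+1} = A z_k + B v_k; the tightened constraints ⟨A_{x,j}, z_k⟩ + ‖(Φ_x^k)ᵀ A_{x,j}‖₁ ≤ b_{x,j} and ⟨A_{u,j}, v_k⟩ + ‖(Φ_u^k)ᵀ A_{u,j}‖₁ ≤ b_{u,j} for all j and k = 0,…,N−1; and the return constraint |⟨e_j, z_N − z₀⟩| + ‖(Φ_x^N)ᵀ e_j‖₁ ≤ α for each standard basis vector e_j, j = 1,…,n. Then Φ_x is invertible, and with K := Φ_u Φ_x⁻¹,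 for every initial state x₀ with ‖x₀ − z₀‖∞ ≤ α and every disturbance sequence w₀,…,w_{N−1} ∈ B∞ⁿ, the trajectory u_k = v_k + Σ_{i=0}^{k} K^{k,i}(x_{k−i} − z_{k−i}), x_{k+1} = A x_k + B u_k + B_w w_k satisfies x_k ∈ X and u_k ∈ U for all k = 0,…,N−1, and ‖x_N − z₀‖∞ ≤ α. -/

import Mathlib

open Matrix Finset Pointwise

noncomputable section

/-- The closed unit ball of the `∞`-norm: `{w : ‖w‖∞ ≤ 1}`. -/
def Binf (ι : Type*) : Set (ι → ℝ) := {w | ∀ i, |w i| ≤ 1}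

/-- Block lower triangular: all `p × q` blocks strictly above the block diagonal vanish. -/
def BlockLT {N p q : ℕ} (M : Matrix (Fin (N+1) × Fin p) (Fin (N+1) × Fin q) ℝ) : Prop :=
  ∀ (i j : Fin (N+1)) (a : Fin p) (b : Fin q), i < j → M (i, a) (j, b) = 0

/-- Strictly block lower triangular: all blocks on or above the block diagonal vanish. -/
def StrictBlockLT {N p q : ℕ} (M : Matrix (Fin (N+1) × Fin p) (Fin (N+1) × Fin q) ℝ) : Prop :=
  ∀ (i j : Fin (N+1)) (a : Fin p) (b : Fin q), i ≤ j → M (i, a) (j, b) = 0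

/-- The block downshift operator `Z`: identity blocks on the first block subdiagonal. -/
def downshift (N n : ℕ) : Matrix (Fin (N+1) × Fin n) (Fin (N+1) × Fin n) ℝ :=
  fun p q => if ((p.1 : ℕ) = (q.1 : ℕ) + 1 ∧ p.2 = q.2) then 1 else 0

/-- `𝒜 = diag(A, …, A, 0)` with `N` copies of `A`. -/
def blkDiagA {n : ℕ} (N : ℕ) (A : Matrix (Fin n) (Fin n) ℝ) :
    Matrix (Fin (N+1) × Fin n) (Fin (N+1) × Fin n) ℝ :=
  fun p q => if (p.1 = q.1 ∧ (p.1 : ℕ) < N) then A p.2 q.2 else 0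

/-- `ℬ = diag(B, …, B, 0)` with `N` copies of `B`. -/
def blkDiagB {n m : ℕ} (N : ℕ) (B : Matrix (Fin n) (Fin m) ℝ) :
    Matrix (Fin (N+1) × Fin n) (Fin (N+1) × Fin m) ℝ :=
  fun p q => if (p.1 = q.1 ∧ (p.1 : ℕ) < N) then B p.2 q.2 else 0

/-- `ℰ = diag(I, B_w, …, B_w)` with `N` copies of `B_w`. -/
def blkDiagE {n : ℕ} (N : ℕ) (Bw : Matrix (Fin n) (Fin n) ℝ) :
    Matrix (Fin (N+1) × Fin n) (Fin (N+1) × Fin n) ℝ :=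
  fun p q => if p.1 = q.1 then
      (if (p.1 : ℕ) = 0 then (if p.2 = q.2 then (1 : ℝ) else 0) else Bw p.2 q.2) else 0

/-- The `(k, j)` block of a block matrix. -/
def blk {N p q : ℕ} (M : Matrix (Fin (N+1) × Fin p) (Fin (N+1) × Fin q) ℝ) (k j : Fin (N+1)) :
    Matrix (Fin p) (Fin q) ℝ := fun a b => M (k, a) (j, b)

/-- The last `N·n` columns of the `k`-th block row of a block matrix (the "`w`" part). -/
def blkRowW {N p n : ℕ} (M : Matrix (Fin (N+1) × Fin p) (Fin (N+1) × Fin n) ℝ) (k : Fin (N+1)) :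
    Matrix (Fin p) (Fin N × Fin n) ℝ := fun a q => M (k, a) (q.1.succ, q.2)

/-- The full `k`-th block row of a block matrix. -/
def blkRowFull {N p n : ℕ} (M : Matrix (Fin (N+1) × Fin p) (Fin (N+1) × Fin n) ℝ)
    (k : Fin (N+1)) : Matrix (Fin p) (Fin (N+1) × Fin n) ℝ := fun a q => M (k, a) q

/-- `ℰ̃(α) = diag(α·I, B_w, …, B_w)` with `N` copies of `B_w`. -/
def blkDiagEt {n : ℕ} (N : ℕ) (α : ℝ) (Bw : Matrix (Fin n) (Fin n) ℝ) :
    Matrix (Fin (N+1) × Fin n) (Fin (N+1) × Fin n) ℝ :=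
  fun p q => if p.1 = q.1 then
      (if (p.1 : ℕ) = 0 then (if p.2 = q.2 then α else 0) else Bw p.2 q.2) else 0

/- ################# helpers ################# -/

/-- Generic block diagonal matrix. -/
def bdiag {N p q : ℕ} (D : Fin (N+1) → Matrix (Fin p) (Fin q) ℝ) :
    Matrix (Fin (N+1) × Fin p) (Fin (N+1) × Fin q) ℝ :=
  fun a b => if a.1 = b.1 then D a.1 a.2 b.2 else 0

lemma bdiag_mulVec {N p q : ℕ} (D : Fin (N+1) → Matrix (Fin p) (Fin q) ℝ)
    (f : Fin (N+1) × Fin q → ℝ) (r : Fin (N+1) × Fin p) :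
    (bdiag D *ᵥ f) r = (D r.1 *ᵥ fun b => f (r.1, b)) r.2 := by
  simp only [Matrix.mulVec, dotProduct, bdiag, Fintype.sum_prod_type, ite_mul, zero_mul]
  rw [Finset.sum_eq_single r.1]
  · simp
  · intro i _ hi
    apply Finset.sum_eq_zero
    intro b _
    rw [if_neg (fun h => hi h.symm)]
  · simp

lemma blkDiagA_eq {N n : ℕ} (A : Matrix (Fin n) (Fin n) ℝ) :
    blkDiagA N A = bdiag (fun k => if (k : ℕ) < N then A else 0) := by
  funext p q
  simp only [blkDiagA, bdiag]
  by_cases h1 : p.1 = q.1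
  · rw [if_pos h1]
    by_cases h2 : (p.1 : ℕ) < N
    · rw [if_pos ⟨h1, h2⟩, if_pos h2]
    · rw [if_neg (fun hc => h2 hc.2), if_neg h2, Matrix.zero_apply]
  · rw [if_neg (fun hc => h1 hc.1), if_neg h1]

lemma blkDiagB_eq {N n m : ℕ} (B : Matrix (Fin n) (Fin m) ℝ) :
    blkDiagB N B = bdiag (fun k => if (k : ℕ) < N then B else 0) := by
  funext p q
  simp only [blkDiagB, bdiag]
  by_cases h1 : p.1 = q.1
  · rw [if_pos h1]
    by_cases h2 : (p.1 : ℕ) < N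
    · rw [if_pos ⟨h1, h2⟩, if_pos h2]
    · rw [if_neg (fun hc => h2 hc.2), if_neg h2, Matrix.zero_apply]
  · rw [if_neg (fun hc => h1 hc.1), if_neg h1]

lemma blkDiagEt_eq {N n : ℕ} (α : ℝ) (Bw : Matrix (Fin n) (Fin n) ℝ) :
    blkDiagEt N α Bw
      = bdiag (fun k => if (k : ℕ) = 0 then α • (1 : Matrix (Fin n) (Fin n) ℝ) else Bw) := by
  funext p q
  simp only [blkDiagEt, bdiag]
  by_cases h1 : p.1 = q.1
  · rw [if_pos h1, if_pos h1]
    by_cases h2 : (p.1 : ℕ) = 0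
    · rw [if_pos h2, if_pos h2, Matrix.smul_apply, Matrix.one_apply, smul_eq_mul,
        mul_ite, mul_one, mul_zero]
    · rw [if_neg h2, if_neg h2]
  · rw [if_neg h1, if_neg h1]

lemma downshift_mulVec_zero {N n : ℕ} (f : Fin (N+1) × Fin n → ℝ) (p : Fin (N+1) × Fin n)
    (h : (p.1 : ℕ) = 0) : (downshift N n *ᵥ f) p = 0 := by
  simp only [Matrix.mulVec, dotProduct, downshift, ite_mul, one_mul, zero_mul]
  apply Finset.sum_eq_zero
  rintro ⟨i, b⟩ _
  rw [if_neg]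
  rintro ⟨h1, -⟩
  omega

lemma downshift_mulVec_succ {N n : ℕ} (f : Fin (N+1) × Fin n → ℝ) (p : Fin (N+1) × Fin n)
    (k' : Fin (N+1)) (hk : (p.1 : ℕ) = (k' : ℕ) + 1) :
    (downshift N n *ᵥ f) p = f (k', p.2) := by
  simp only [Matrix.mulVec, dotProduct, downshift, ite_mul, one_mul, zero_mul]
  rw [Finset.sum_eq_single (k', p.2)]
  · rw [if_pos ⟨hk, rfl⟩]
  · rintro ⟨i, b⟩ _ hne
    rw [if_neg]
    rintro ⟨h1, h2⟩
    dsimp only at h1 h2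
    exact hne (by simp only [Prod.mk.injEq]; exact ⟨Fin.ext (by omega), h2.symm⟩)
  · simp

def bfun (N p : ℕ) : Fin (N+1) × Fin p → (Fin (N+1))ᵒᵈ := fun r => OrderDual.toDual r.1

lemma blockLT_iff {N p : ℕ} (M : Matrix (Fin (N+1) × Fin p) (Fin (N+1) × Fin p) ℝ) :
    BlockLT M ↔ Matrix.BlockTriangular M (bfun N p) := by
  constructor
  · intro h i j hij
    exact h i.1 j.1 i.2 j.2 hij
  · intro h i j a b hij
    exact h (show bfun N p (j, b) < bfun N p (i, a) from hij)

lemma isUnit_of_blockLT {N p : ℕ} (M : Matrix (Fin (N+1) × Fin p) (Fin (N+1) × Fin p) ℝ)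
    (hM : BlockLT M) (hd : ∀ k : Fin (N+1), IsUnit (blk M k k).det) : IsUnit M := by
  rw [Matrix.isUnit_iff_isUnit_det]
  rw [((blockLT_iff M).1 hM).det]
  rw [isUnit_iff_ne_zero, Finset.prod_ne_zero_iff]
  intro a ha
  obtain ⟨i, -, rfl⟩ := Finset.mem_image.1 ha
  let e : {r : Fin (N+1) × Fin p // bfun N p r = bfun N p i} ≃ Fin p :=
    { toFun := fun s => s.1.2
      invFun := fun c => ⟨(i.1, c), rfl⟩
      left_inv := fun s => by
        apply Subtype.ext
        have h1 : s.1.1 = i.1 := OrderDual.toDual.injective s.2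
        exact Prod.ext h1.symm rfl
      right_inv := fun c => rfl }
  have hM2 : M.toSquareBlock (bfun N p) (bfun N p i) = (blk M i.1 i.1).submatrix e e := by
    funext r s
    have h1 : r.1.1 = i.1 := OrderDual.toDual.injective r.2
    have h2 : s.1.1 = i.1 := OrderDual.toDual.injective s.2
    show M r.1 s.1 = M (i.1, r.1.2) (i.1, s.1.2)
    rw [show ((i.1, r.1.2) : Fin (N+1) × Fin p) = r.1 from Prod.ext h1.symm rfl,
        show ((i.1, s.1.2) : Fin (N+1) × Fin p) = s.1 from Prod.ext h2.symm rfl]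
  rw [hM2, Matrix.det_submatrix_equiv_self]
  exact isUnit_iff_ne_zero.1 (hd i.1)

lemma strict_of_sub_mul {N n p q : ℕ} (P : Matrix (Fin (N+1) × Fin n) (Fin (N+1) × Fin p) ℝ)
    (M : Matrix (Fin (N+1) × Fin p) (Fin (N+1) × Fin q) ℝ)
    (hP : ∀ r s, (r.1 : ℕ) ≠ (s.1 : ℕ) + 1 → P r s = 0) (hM : BlockLT M) :
    StrictBlockLT (P * M) := by
  intro i j a b hij
  rw [Matrix.mul_apply]
  apply Finset.sum_eq_zero
  intro r _
  rcases eq_or_ne ((i : ℕ)) ((r.1 : ℕ) + 1) with h | h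
  · rw [hM r.1 j r.2 b (by rw [Fin.lt_def]; omega), mul_zero]
  · rw [hP (i, a) r h, zero_mul]

lemma downshift_mul_subdiag {N n q : ℕ} (M : Matrix (Fin (N+1) × Fin n) (Fin (N+1) × Fin q) ℝ)
    (hM : ∀ r s, r.1 ≠ s.1 → M r s = 0) :
    ∀ r s, (r.1 : ℕ) ≠ (s.1 : ℕ) + 1 → (downshift N n * M) r s = 0 := by
  intro r s h
  rw [Matrix.mul_apply]
  apply Finset.sum_eq_zero
  intro t _
  by_cases h1 : (r.1 : ℕ) = (t.1 : ℕ) + 1 ∧ r.2 = t.2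
  · rw [hM t s (fun he => h (he ▸ h1.1)), mul_zero]
  · rw [show downshift N n r t = 0 from if_neg h1, zero_mul]

lemma blockLT_mul {N p q r : ℕ} {M : Matrix (Fin (N+1) × Fin p) (Fin (N+1) × Fin q) ℝ}
    {P : Matrix (Fin (N+1) × Fin q) (Fin (N+1) × Fin r) ℝ}
    (hM : BlockLT M) (hP : BlockLT P) : BlockLT (M * P) := by
  intro i j a b hij
  rw [Matrix.mul_apply]
  apply Finset.sum_eq_zero
  intro t _
  rcases lt_or_ge i t.1 with h | h
  · rw [hM i t.1 a t.2 h, zero_mul]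
  · rw [hP t.1 j t.2 b (lt_of_le_of_lt h hij), mul_zero]

/-- `N`-step safe excursion of the explicit system level backup
controller (key step of Theorem 2). -/
theorem stmt15 (n m N nx nu : ℕ) (hN : 1 ≤ N)
    (A : Matrix (Fin n) (Fin n) ℝ) (B : Matrix (Fin n) (Fin m) ℝ)
    (Bw : Matrix (Fin n) (Fin n) ℝ) (hBw : IsUnit Bw)
    (α : ℝ) (hα : 0 < α)
    (Ax : Fin nx → Fin n → ℝ) (bx : Fin nx → ℝ)
    (Au : Fin nu → Fin m → ℝ) (bu : Fin nu → ℝ)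
    (Φx : Matrix (Fin (N+1) × Fin n) (Fin (N+1) × Fin n) ℝ)
    (Φu : Matrix (Fin (N+1) × Fin m) (Fin (N+1) × Fin n) ℝ)
    (hΦx : BlockLT Φx) (hΦu : BlockLT Φu)
    (hSLP : (1 - downshift N n * blkDiagA N A) * Φx - downshift N n * blkDiagB N B * Φu
      = blkDiagEt N α Bw)
    (z : Fin (N+1) → Fin n → ℝ) (v : Fin N → Fin m → ℝ)
    (hz : ∀ k : Fin N, z k.succ = A *ᵥ z k.castSucc + B *ᵥ v k)
    (htx : ∀ (k : Fin N) (j : Fin nx),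
      Ax j ⬝ᵥ z k.castSucc + (∑ q, |((blkRowFull Φx k.castSucc)ᵀ *ᵥ Ax j) q|) ≤ bx j)
    (htu : ∀ (k : Fin N) (j : Fin nu),
      Au j ⬝ᵥ v k + (∑ q, |((blkRowFull Φu k.castSucc)ᵀ *ᵥ Au j) q|) ≤ bu j)
    (hret : ∀ j : Fin n,
      |z (Fin.last N) j - z 0 j| + (∑ q, |blkRowFull Φx (Fin.last N) j q|) ≤ α) :
    IsUnit Φx ∧
    ∀ (K : Matrix (Fin (N+1) × Fin m) (Fin (N+1) × Fin n) ℝ), K = Φu * Φx⁻¹ →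
    ∀ (x : Fin (N+1) → Fin n → ℝ) (u : Fin N → Fin m → ℝ) (w : Fin N → Fin n → ℝ),
      (∀ a, |x 0 a - z 0 a| ≤ α) →
      (∀ k, w k ∈ Binf (Fin n)) →
      (∀ k : Fin N, u k = v k + ∑ j : Fin (N+1),
          if (j : ℕ) ≤ (k : ℕ) then (blk K k.castSucc j) *ᵥ (x j - z j) else 0) →
      (∀ k : Fin N, x k.succ = A *ᵥ x k.castSucc + B *ᵥ u k + Bw *ᵥ w k) →
      (∀ k : Fin N, (∀ j, Ax j ⬝ᵥ x k.castSucc ≤ bx j) ∧ (∀ j, Au j ⬝ᵥ u k ≤ bu j)) ∧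
      (∀ a, |x (Fin.last N) a - z 0 a| ≤ α) := by
    classical
  have hαne : α ≠ 0 := ne_of_gt hα
  set ZA := downshift N n * blkDiagA N A with hZAdef
  set ZBB := downshift N n * blkDiagB N B with hZBdef
  set E := blkDiagEt N α Bw with hEdef
  have hAd : ∀ r s : Fin (N+1) × Fin n, r.1 ≠ s.1 → blkDiagA N A r s = 0 :=
    fun r s h => if_neg (fun hc => h hc.1)
  have hBd : ∀ (r : Fin (N+1) × Fin n) (s : Fin (N+1) × Fin m), r.1 ≠ s.1 → blkDiagB N B r s = 0 :=
    fun r s h => if_neg (fun hc => h hc.1)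
  have hstrict1 : StrictBlockLT (ZA * Φx) :=
    strict_of_sub_mul _ _ (downshift_mul_subdiag _ hAd) hΦx
  have hstrict2 : StrictBlockLT (ZBB * Φu) :=
    strict_of_sub_mul _ _ (downshift_mul_subdiag _ hBd) hΦu
  have hdiagx : ∀ (k : Fin (N+1)) (a b : Fin n), Φx (k, a) (k, b) = E (k, a) (k, b) := by
    intro k a b
    have h := congrFun (congrFun hSLP (k, a)) (k, b)
    rw [Matrix.sub_mul, Matrix.one_mul] at h
    simp only [Matrix.sub_apply] at h
    rw [hstrict1 k k a b le_rfl, hstrict2 k k a b le_rfl] at h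
    linarith
  have hEblk : ∀ k : Fin (N+1), blk E k k
      = if (k : ℕ) = 0 then α • (1 : Matrix (Fin n) (Fin n) ℝ) else Bw := by
    intro k
    funext a b
    show E (k, a) (k, b) = _
    rw [hEdef]
    by_cases h2 : (k : ℕ) = 0
    · rw [if_pos h2]
      simp [blkDiagEt, h2, Matrix.one_apply, mul_ite]
    · rw [if_neg h2]
      simp [blkDiagEt, h2]
  have hunitblk : ∀ (M' : Matrix (Fin n) (Fin n) ℝ) (k : Fin (N+1)),
      M' = (if (k : ℕ) = 0 then α • (1 : Matrix (Fin n) (Fin n) ℝ) else Bw) → IsUnit M'.det := by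
    intro M' k hM'
    rw [hM']
    by_cases h2 : (k : ℕ) = 0
    · rw [if_pos h2, Matrix.det_smul, Matrix.det_one, mul_one]
      exact isUnit_iff_ne_zero.2 (pow_ne_zero _ hαne)
    · rw [if_neg h2]
      exact (Matrix.isUnit_iff_isUnit_det Bw).1 hBw
  have hEdiag : ∀ k, IsUnit (blk E k k).det := fun k => hunitblk _ k (hEblk k)
  have hxdiag : ∀ k, IsUnit (blk Φx k k).det := by
    intro k
    apply hunitblk _ k
    rw [← hEblk k]
    funext a b
    exact hdiagx k a b
  have hux : IsUnit Φx := isUnit_of_blockLT Φx hΦx hxdiag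
  have hdet : IsUnit Φx.det := (Matrix.isUnit_iff_isUnit_det Φx).1 hux
  have hEblockLT : BlockLT E := by
    intro i j a b hij
    rw [hEdef]
    exact if_neg (ne_of_lt hij)
  have hEunit : IsUnit E := isUnit_of_blockLT E hEblockLT hEdiag
  have hEdet : IsUnit E.det := (Matrix.isUnit_iff_isUnit_det E).1 hEunit
  refine ⟨hux, ?_⟩
  intro K hK x u w hx0 hw hu hdyn
  haveI := Matrix.invertibleOfIsUnitDet Φx hdet
  have hΦxi : BlockLT Φx⁻¹ :=
    (blockLT_iff _).2 (Matrix.blockTriangular_inv_of_blockTriangular ((blockLT_iff _).1 hΦx))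
  have hKLT : BlockLT K := by rw [hK]; exact blockLT_mul hΦu hΦxi
  have hKx : K * Φx = Φu := by
    rw [hK, Matrix.mul_assoc, Matrix.nonsing_inv_mul _ hdet, Matrix.mul_one]
  set δ : Fin (N+1) × Fin n → ℝ := fun p => x p.1 p.2 - z p.1 p.2 with hδdef
  set wb : Fin (N+1) × Fin n → ℝ := fun p =>
    if h : (p.1 : ℕ) = 0 then (x 0 p.2 - z 0 p.2) * α⁻¹
    else w ⟨(p.1 : ℕ) - 1, by have := p.1.isLt; omega⟩ p.2 with hwbdef
  have hwb1 : ∀ q, |wb q| ≤ 1 := by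
    intro q
    simp only [hwbdef]
    by_cases h : (q.1 : ℕ) = 0
    · rw [dif_pos h, abs_mul, abs_of_pos (inv_pos.2 hα)]
      calc |x 0 q.2 - z 0 q.2| * α⁻¹ ≤ α * α⁻¹ :=
            mul_le_mul_of_nonneg_right (hx0 q.2) (le_of_lt (inv_pos.2 hα))
        _ = 1 := mul_inv_cancel₀ hαne
    · rw [dif_neg h]
      exact hw _ q.2
  have hKδ : ∀ (k : Fin N) (c : Fin m), (K *ᵥ δ) (k.castSucc, c) = u k c - v k c := by
    intro k c
    have h := congrFun (hu k) c
    rw [Pi.add_apply, Finset.sum_apply] at h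
    have hterm : ∀ j : Fin (N+1),
        (if (j : ℕ) ≤ (k : ℕ) then blk K k.castSucc j *ᵥ (x j - z j) else 0) c
          = (blk K k.castSucc j *ᵥ fun b => δ (j, b)) c := by
      intro j
      by_cases hj : (j : ℕ) ≤ (k : ℕ)
      · rw [if_pos hj]
        rfl
      · rw [if_neg hj, Pi.zero_apply]
        have hz0 : blk K k.castSucc j = 0 := by
          funext a b
          exact hKLT k.castSucc j a b (by rw [Fin.lt_def]; simp; omega)
        rw [hz0, Matrix.zero_mulVec, Pi.zero_apply]
    rw [Finset.sum_congr rfl (fun j _ => hterm j)] at h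
    have hmv : (K *ᵥ δ) (k.castSucc, c) = ∑ j, (blk K k.castSucc j *ᵥ fun b => δ (j, b)) c := by
      simp only [Matrix.mulVec, dotProduct, Fintype.sum_prod_type, blk]
    rw [hmv, h]
    ring
  have hSdyn : (1 - ZA - ZBB * K) *ᵥ δ = E *ᵥ wb := by
    funext p
    have lhs_eq : ((1 - ZA - ZBB * K) *ᵥ δ) p = δ p - (ZA *ᵥ δ) p - ((ZBB * K) *ᵥ δ) p := by
      rw [Matrix.sub_mulVec, Matrix.sub_mulVec, Matrix.one_mulVec, Pi.sub_apply, Pi.sub_apply]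
    rw [lhs_eq]
    rcases Nat.eq_zero_or_pos (p.1 : ℕ) with h0 | h0
    · have e1 : (ZA *ᵥ δ) p = 0 := by
        rw [hZAdef, ← Matrix.mulVec_mulVec]
        exact downshift_mulVec_zero _ _ h0
      have e2 : ((ZBB * K) *ᵥ δ) p = 0 := by
        rw [hZBdef, Matrix.mul_assoc, ← Matrix.mulVec_mulVec]
        exact downshift_mulVec_zero _ _ h0
      have e3 : (E *ᵥ wb) p = α * wb p := by
        rw [hEdef, blkDiagEt_eq, bdiag_mulVec, if_pos h0, Matrix.smul_mulVec,
          Matrix.one_mulVec, Pi.smul_apply, smul_eq_mul]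
      rw [e1, e2, e3]
      have hp1 : p.1 = (0 : Fin (N+1)) := Fin.ext h0
      simp only [hδdef, hwbdef, dif_pos h0]
      rw [hp1]
      rw [mul_comm (x 0 p.2 - z 0 p.2) α⁻¹, ← mul_assoc, mul_inv_cancel₀ hαne, one_mul]
      ring
    · set k' : Fin N := ⟨(p.1 : ℕ) - 1, by have := p.1.isLt; omega⟩ with hk'def
      have hksucc : k'.succ = p.1 := Fin.ext (by simp [Fin.val_succ, hk'def]; omega)
      have hkcast : ((k'.castSucc : Fin (N+1)) : ℕ) + 1 = (p.1 : ℕ) := by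
        simp [Fin.coe_castSucc, hk'def]; omega
      have e1 : (ZA *ᵥ δ) p = (A *ᵥ fun b => δ (k'.castSucc, b)) p.2 := by
        rw [hZAdef, ← Matrix.mulVec_mulVec,
          downshift_mulVec_succ _ _ k'.castSucc hkcast.symm,
          blkDiagA_eq, bdiag_mulVec, if_pos (by simp [Fin.coe_castSucc])]
      have e2 : ((ZBB * K) *ᵥ δ) p = (B *ᵥ fun b => u k' b - v k' b) p.2 := by
        rw [hZBdef, Matrix.mul_assoc, ← Matrix.mulVec_mulVec, ← Matrix.mulVec_mulVec,
          downshift_mulVec_succ _ _ k'.castSucc hkcast.symm,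
          blkDiagB_eq, bdiag_mulVec, if_pos (by simp [Fin.coe_castSucc])]
        congr 1
        funext b
        exact hKδ k' b
      have e3 : (E *ᵥ wb) p = (Bw *ᵥ fun b => w k' b) p.2 := by
        rw [hEdef, blkDiagEt_eq, bdiag_mulVec, if_neg (by omega)]
        congr 1
        funext b
        simp only [hwbdef]
        rw [dif_neg (by omega)]
      rw [e1, e2, e3]
      have hxp : x p.1 = A *ᵥ x k'.castSucc + B *ᵥ u k' + Bw *ᵥ w k' := by
        rw [← hksucc]; exact hdyn k'
      have hzp : z p.1 = A *ᵥ z k'.castSucc + B *ᵥ v k' := by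
        rw [← hksucc]; exact hz k'
      have hδp : δ p = x p.1 p.2 - z p.1 p.2 := by simp [hδdef]
      have hδc : (fun b => δ (k'.castSucc, b)) = x k'.castSucc - z k'.castSucc := by
        funext b; simp [hδdef]
      have huv : (fun b => u k' b - v k' b) = u k' - v k' := rfl
      rw [hδp, hδc, huv, Matrix.mulVec_sub, Matrix.mulVec_sub, Pi.sub_apply, Pi.sub_apply,
        congrFun hxp p.2, congrFun hzp p.2]
      simp only [Pi.add_apply]
      ring
  have hS : (1 - ZA - ZBB * K) * Φx = E := by
    rw [Matrix.sub_mul, Matrix.mul_assoc, hKx]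
    exact hSLP
  have hS2 : (1 - ZA - ZBB * K) = E * Φx⁻¹ := by
    rw [← hS, Matrix.mul_assoc (1 - ZA - ZBB * K) Φx Φx⁻¹,
      Matrix.mul_nonsing_inv _ hdet, Matrix.mul_one]
  have hinv : Φx⁻¹ *ᵥ δ = wb := by
    have h1 : E *ᵥ (Φx⁻¹ *ᵥ δ) = E *ᵥ wb := by
      rw [Matrix.mulVec_mulVec, ← hS2, hSdyn]
    have h2 := congrArg (fun vv => E⁻¹ *ᵥ vv) h1
    simpa [Matrix.mulVec_mulVec, ← Matrix.mul_assoc, Matrix.nonsing_inv_mul _ hEdet,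
      Matrix.one_mul, Matrix.one_mulVec] using h2
  have hδeq : δ = Φx *ᵥ wb := by
    rw [← hinv, Matrix.mulVec_mulVec, Matrix.mul_nonsing_inv _ hdet, Matrix.one_mulVec]
  have hueq : Φu *ᵥ wb = K *ᵥ δ := by
    rw [← hKx, ← Matrix.mulVec_mulVec, ← hδeq]
  have hrow : ∀ {κ : ℕ} (M : Matrix (Fin (N+1) × Fin κ) (Fin (N+1) × Fin n) ℝ)
      (k : Fin (N+1)) (c : Fin κ → ℝ),
      ∑ a, c a * (M *ᵥ wb) (k, a) = ∑ q, ((blkRowFull M k)ᵀ *ᵥ c) q * wb q := by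
    intro κ M k c
    simp only [Matrix.mulVec, dotProduct, Matrix.transpose_apply, blkRowFull, Finset.mul_sum,
      Finset.sum_mul]
    rw [Finset.sum_comm]
    exact Finset.sum_congr rfl fun q _ => Finset.sum_congr rfl fun a _ => by ring
  have habs : ∀ cc : Fin (N+1) × Fin n → ℝ, |∑ q, cc q * wb q| ≤ ∑ q, |cc q| := by
    intro cc
    refine le_trans (Finset.abs_sum_le_sum_abs _ _) (Finset.sum_le_sum fun q _ => ?_)
    rw [abs_mul]
    calc |cc q| * |wb q| ≤ |cc q| * 1 := mul_le_mul_of_nonneg_left (hwb1 q) (abs_nonneg _)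
      _ = |cc q| := mul_one _
  constructor
  · intro k
    constructor
    · intro j
      have hd : ∀ a, x k.castSucc a = z k.castSucc a + (Φx *ᵥ wb) (k.castSucc, a) := by
        intro a
        have h1 := congrFun hδeq (k.castSucc, a)
        simp only [hδdef] at h1
        linarith
      have h3 : ∑ a, Ax j a * (Φx *ᵥ wb) (k.castSucc, a)
          ≤ ∑ q, |((blkRowFull Φx k.castSucc)ᵀ *ᵥ Ax j) q| := by
        rw [hrow]
        exact le_trans (le_abs_self _) (habs _)
      calc Ax j ⬝ᵥ x k.castSucc
          = Ax j ⬝ᵥ z k.castSucc + ∑ a, Ax j a * (Φx *ᵥ wb) (k.castSucc, a) := by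
            simp only [dotProduct]
            rw [← Finset.sum_add_distrib]
            exact Finset.sum_congr rfl fun a _ => by rw [hd a]; ring
        _ ≤ Ax j ⬝ᵥ z k.castSucc + ∑ q, |((blkRowFull Φx k.castSucc)ᵀ *ᵥ Ax j) q| := by
            linarith
        _ ≤ bx j := htx k j
    · intro j
      have hd : ∀ c, u k c = v k c + (Φu *ᵥ wb) (k.castSucc, c) := by
        intro c
        have h1 := congrFun hueq (k.castSucc, c)
        have h2 := hKδ k c
        rw [h2] at h1
        linarith
      have h3 : ∑ c, Au j c * (Φu *ᵥ wb) (k.castSucc, c)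
          ≤ ∑ q, |((blkRowFull Φu k.castSucc)ᵀ *ᵥ Au j) q| := by
        rw [hrow]
        exact le_trans (le_abs_self _) (habs _)
      calc Au j ⬝ᵥ u k
          = Au j ⬝ᵥ v k + ∑ c, Au j c * (Φu *ᵥ wb) (k.castSucc, c) := by
            simp only [dotProduct]
            rw [← Finset.sum_add_distrib]
            exact Finset.sum_congr rfl fun c _ => by rw [hd c]; ring
        _ ≤ Au j ⬝ᵥ v k + ∑ q, |((blkRowFull Φu k.castSucc)ᵀ *ᵥ Au j) q| := by
            linarith
        _ ≤ bu j := htu k j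
  · intro a
    have h1 : x (Fin.last N) a - z 0 a
        = (z (Fin.last N) a - z 0 a) + (Φx *ᵥ wb) (Fin.last N, a) := by
      have h2 := congrFun hδeq (Fin.last N, a)
      simp only [hδdef] at h2
      linarith
    have h2 : |(Φx *ᵥ wb) (Fin.last N, a)| ≤ ∑ q, |blkRowFull Φx (Fin.last N) a q| := by
      have h4 : (Φx *ᵥ wb) (Fin.last N, a) = ∑ q, blkRowFull Φx (Fin.last N) a q * wb q := by
        simp only [Matrix.mulVec, dotProduct, blkRowFull]
      rw [h4]
      exact habs _
    calc |x (Fin.last N) a - z 0 a|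
        ≤ |z (Fin.last N) a - z 0 a| + |(Φx *ᵥ wb) (Fin.last N, a)| := by
          rw [h1]; exact abs_add_le _ _
      _ ≤ α := by have := hret a; linarith
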